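/- arXiv:1703.06717 — 4 statements merged into one kernel-verified Lean document; each statement's English description precedes it below -/
import Mathlib

section
/- Let $a, b, c \in \mathbb{R}[u]$ be polynomials with $\gcd(a,c)=1$ and $\gcd(b,c)=1$, not all zero. Then the syzygy module $Z = \{(A,B,C) \in \mathbb{R}[u]^3 : Aa + Bb + Cc = 0\}$ is a free $\mathbb{R}[u]$-module of rank $2$. -/
open Polynomial

/-- The linear map `(A,B,C) ↦ A*a + B*b + C*c` whose kernel is the syzygy module. -/
noncomputable def syzMap (a b c : ℝ[X]) :
    (ℝ[X] × ℝ[X] × ℝ[X]) →ₗ[ℝ[X]] ℝ[X] where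
  toFun x := x.1 * a + x.2.1 * b + x.2.2 * c
  map_add' x y := by
    simp only [Prod.fst_add, Prod.snd_add]
    ring
  map_smul' m x := by
    simp only [Prod.smul_fst, Prod.smul_snd, smul_eq_mul, RingHom.id_apply]
    ring

/-! Coprimality of `a` and `c` makes `syzMap a b c` surjective, so by rank–nullity over the
domain `ℝ[X]` its kernel has rank `3 - 1 = 2`; being a finitely generated torsion-free module
over a PID, the kernel is free. -/

theorem syzMap_surjective {a c : ℝ[X]} (b : ℝ[X]) (hac : IsCoprime a c) :
    Function.Surjective (syzMap a b c) := by
  obtain ⟨x, y, hxy⟩ := hac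
  intro p
  refine ⟨(p * x, 0, p * y), ?_⟩
  show p * x * a + 0 * b + p * y * c = p
  linear_combination p * hxy

theorem syz_free_rank_two_general (a b c : ℝ[X])
    (hac : IsCoprime a c) :
    Module.Free ℝ[X] ↥(LinearMap.ker (syzMap a b c)) ∧
      Module.rank ℝ[X] ↥(LinearMap.ker (syzMap a b c)) = 2 := by
  have hrank := LinearMap.rank_eq_of_surjective (syzMap_surjective b hac)
  rw [rank_prod', rank_prod', Module.rank_self] at hrank
  refine ⟨inferInstance, Cardinal.eq_of_add_eq_add_left ?_ Cardinal.one_lt_aleph0⟩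
  rw [← hrank]
  norm_num

/-- The syzygy module `Z = {(A,B,C) : Aa + Bb + Cc = 0}` of three real polynomials with
`gcd(a,c) = gcd(b,c) = 1`, not all zero, is a free `ℝ[u]`-module of rank 2. -/
theorem syz_free_rank_two (a b c : ℝ[X])
    (hac : IsCoprime a c) (hbc : IsCoprime b c)
    (hne : ¬(a = 0 ∧ b = 0 ∧ c = 0)) :
    Module.Free ℝ[X] ↥(LinearMap.ker (syzMap a b c)) ∧
      Module.rank ℝ[X] ↥(LinearMap.ker (syzMap a b c)) = 2 :=
  syz_free_rank_two_general a b c hac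
end

section
/- Let $a,b,c \in \mathbb{R}[u]$ with $\gcd(a,c)=\gcd(b,c)=1$, not all zero, and let $n = \max\{\deg a, \deg b, \deg c\}$. If $(p,q)$ is a basis of the free module $\mathrm{Syz}(a,b,c)$ with $\deg p = \mu$ and $\deg q = \nu$ (where the degree of a triple is the maximum of the degrees of its components), then $\mu + \nu = n$. -/
/-!
Write `v = (a, b, c)`. Bézout for `a` and `c` gives `w` with `w ⬝ v = 1`, and then the vectors
`eᵢ - vᵢ w` are syzygies. Expressing them in the basis `(p, q)` exhibits a matrix inverse of the
matrix with rows `w, p, q`, so its determinant `L = w ⬝ (p × q)` is a unit, and dotting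
`eᵢ - vᵢ w` with `p × q` gives `p × q = L v`. Hence `deg (p × q) = n`.
On the other hand the leading coefficient vectors of `p` and `q` are linearly independent:
otherwise subtracting a monomial multiple of `p` from `q` would give a syzygy of degree `< ν`
that is not a multiple of `p`. So the coefficient of `u^(μ+ν)` in `p × q` is nonzero and
`deg (p × q) = μ + ν`.
-/

open Polynomial

/-- The degree of a triple of polynomials: the maximum of the degrees of the components. -/
noncomputable def tripleDeg (x : ℝ[X] × ℝ[X] × ℝ[X]) : ℕ :=
  max x.1.natDegree (max x.2.1.natDegree x.2.2.natDegree)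

/-- Membership in the syzygy module `Syz(a,b,c)`. -/
def InSyz (a b c : ℝ[X]) (x : ℝ[X] × ℝ[X] × ℝ[X]) : Prop :=
  x.1 * a + x.2.1 * b + x.2.2 * c = 0

open Matrix

section CrossProduct

variable {R : Type*} [CommRing R] {v w p q : Fin 3 → R}

theorem exists_isUnit_cross_eq_smul (hwv : w ⬝ᵥ v = 1)
    (hspan : ∀ x, x ⬝ᵥ v = 0 → ∃ s t : R, x = s • p + t • q) :
    ∃ L : R, IsUnit L ∧ p ⨯₃ q = L • v := by
  have hsyz : ∀ i, ∃ s t : R, Pi.single i 1 - v i • w = s • p + t • q := fun i =>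
    hspan _ (by simp [sub_dotProduct, smul_dotProduct, hwv])
  choose s t hst using hsyz
  refine ⟨w ⬝ᵥ p ⨯₃ q, ?_, ?_⟩
  · have hinv : Matrix.of (fun i => ![v i, s i, t i]) * Matrix.of ![w, p, q] = 1 := by
      ext i j
      have := congrFun (hst i) j
      simp [Matrix.mul_apply, Fin.sum_univ_three, Pi.single_apply, Matrix.one_apply, eq_comm]
        at this ⊢
      linear_combination this
    rw [triple_product_eq_det]
    exact isUnit_det_of_left_inverse hinv
  · ext i
    have := congrArg (· ⬝ᵥ p ⨯₃ q) (hst i)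
    simp [sub_dotProduct, add_dotProduct, smul_dotProduct, dot_self_cross, dot_cross_self] at this
    simpa [mul_comm, sub_eq_zero] using this

end CrossProduct

section MaxNatDegree

variable {ι R : Type*} [Fintype ι] [Semiring R]

noncomputable def maxNatDegree (x : ι → R[X]) : ℕ :=
  Finset.univ.sup fun i => (x i).natDegree

def vecCoeff (x : ι → R[X]) (d : ℕ) : ι → R :=
  fun i => (x i).coeff d

theorem maxNatDegree_le_iff {x : ι → R[X]} {d : ℕ} :
    maxNatDegree x ≤ d ↔ ∀ i, (x i).natDegree ≤ d := by
  simp [maxNatDegree]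

theorem natDegree_le_maxNatDegree (x : ι → R[X]) (i : ι) : (x i).natDegree ≤ maxNatDegree x :=
  Finset.le_sup (f := fun i => (x i).natDegree) (Finset.mem_univ i)

theorem vecCoeff_maxNatDegree_ne_zero {x : ι → R[X]} (hx : x ≠ 0) :
    vecCoeff x (maxNatDegree x) ≠ 0 := by
  obtain ⟨j, hj⟩ := Function.ne_iff.mp hx
  obtain ⟨i, -, hi⟩ := Finset.exists_mem_eq_sup Finset.univ ⟨j, Finset.mem_univ j⟩
    fun i => (x i).natDegree
  rw [← maxNatDegree] at hi
  rw [Function.ne_iff]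
  by_cases hxi : x i = 0
  · -- then `maxNatDegree x = 0`, so the nonzero `x j` is a constant
    have hj0 : (x j).natDegree = 0 := by
      simpa [hxi, hi] using natDegree_le_maxNatDegree x j
    exact ⟨j, by simpa [vecCoeff, hi, hxi, ← hj0] using hj⟩
  · exact ⟨i, by simpa [vecCoeff, hi] using hxi⟩

theorem maxNatDegree_eq_of_le_of_vecCoeff_ne_zero {x : ι → R[X]} {d : ℕ}
    (hle : ∀ i, (x i).natDegree ≤ d) (hd : vecCoeff x d ≠ 0) : maxNatDegree x = d := by
  obtain ⟨i, hi⟩ := Function.ne_iff.mp hd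
  exact le_antisymm (maxNatDegree_le_iff.mpr hle)
    ((le_natDegree_of_ne_zero hi).trans (natDegree_le_maxNatDegree x i))

theorem maxNatDegree_smul_of_isUnit [NoZeroDivisors R] {u : R[X]} (hu : IsUnit u)
    (x : ι → R[X]) : maxNatDegree (u • x) = maxNatDegree x := by
  obtain ⟨r, hr, rfl⟩ := isUnit_iff.mp hu
  simp [maxNatDegree, natDegree_C_mul_of_isUnit hr]

end MaxNatDegree

section PolynomialCrossProduct

variable {R : Type*} [CommRing R] {p q : Fin 3 → R[X]} {m n : ℕ}

theorem natDegree_cross_le (hp : ∀ i, (p i).natDegree ≤ m) (hq : ∀ i, (q i).natDegree ≤ n)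
    (i : Fin 3) : ((p ⨯₃ q) i).natDegree ≤ m + n := by
  fin_cases i <;> simp only [cross_apply, Fin.zero_eta, Fin.mk_one, Fin.reduceFinMk, cons_val] <;>
    simpa using natDegree_sub_le_of_le (natDegree_mul_le_of_le (hp _) (hq _))
      (natDegree_mul_le_of_le (hp _) (hq _))

theorem vecCoeff_cross (hp : ∀ i, (p i).natDegree ≤ m) (hq : ∀ i, (q i).natDegree ≤ n) :
    vecCoeff (p ⨯₃ q) (m + n) = vecCoeff p m ⨯₃ vecCoeff q n := by
  ext i
  fin_cases i <;>
    simp [vecCoeff, cross_apply, coeff_mul_add_eq_of_natDegree_le (hp _) (hq _)]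

end PolynomialCrossProduct

section SyzygyBasis

variable {K : Type*} [Field K] {v p q : Fin 3 → K[X]}

theorem linearIndependent_vecCoeff_maxNatDegree (hp : p ⬝ᵥ v = 0) (hq : q ⬝ᵥ v = 0)
    (hind : ∀ s t : K[X], s • p + t • q = 0 → s = 0 ∧ t = 0)
    (hpq : maxNatDegree p ≤ maxNatDegree q)
    (hqmin : ∀ x, x ⬝ᵥ v = 0 → (∀ s : K[X], x ≠ s • p) →
      maxNatDegree q ≤ maxNatDegree x) :
    LinearIndependent K ![vecCoeff p (maxNatDegree p), vecCoeff q (maxNatDegree q)] := by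
  set m := maxNatDegree p
  set n := maxNatDegree q
  have hp0 : p ≠ 0 := fun h => one_ne_zero (hind 1 0 (by simp [h])).1
  have hlead : vecCoeff p m ≠ 0 := vecCoeff_maxNatDegree_ne_zero hp0
  rw [LinearIndependent.pair_iff' hlead]
  intro β hβ
  set q' := q - (C β * X ^ (n - m)) • p
  have hq'syz : q' ⬝ᵥ v = 0 := by simp [q', sub_dotProduct, smul_dotProduct, hp, hq]
  have hq'p : ∀ s : K[X], q' ≠ s • p := by
    intro s hs
    have := (hind (s + C β * X ^ (n - m)) (-1) (by
      linear_combination (norm := module) -hs)).2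
    exact one_ne_zero (neg_eq_zero.mp this)
  have hq'le : ∀ i, (q' i).natDegree ≤ n := by
    intro i
    have := natDegree_sub_le_of_le (natDegree_le_maxNatDegree q i : _ ≤ n)
      (natDegree_mul_le_of_le (natDegree_C_mul_X_pow_le β (n - m))
        (natDegree_le_maxNatDegree p i : _ ≤ m))
    exact this.trans (by omega)
  have hq'coeff : vecCoeff q' n = 0 := by
    ext i
    have hcoeff := congrFun hβ i
    simp only [vecCoeff, Pi.smul_apply, smul_eq_mul] at hcoeff
    simp [vecCoeff, q', mul_assoc, coeff_X_pow_mul', Nat.sub_sub_self hpq, hcoeff]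
  have hq'n : maxNatDegree q' = n :=
    le_antisymm (maxNatDegree_le_iff.mpr hq'le) (hqmin q' hq'syz hq'p)
  exact vecCoeff_maxNatDegree_ne_zero (by simpa using hq'p 0) (hq'n ▸ hq'coeff)

theorem maxNatDegree_add_maxNatDegree_eq {w : Fin 3 → K[X]} (hwv : w ⬝ᵥ v = 1)
    (hp : p ⬝ᵥ v = 0) (hq : q ⬝ᵥ v = 0)
    (hspan : ∀ x, x ⬝ᵥ v = 0 → ∃ s t : K[X], x = s • p + t • q)
    (hind : ∀ s t : K[X], s • p + t • q = 0 → s = 0 ∧ t = 0)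
    (hpq : maxNatDegree p ≤ maxNatDegree q)
    (hqmin : ∀ x, x ⬝ᵥ v = 0 → (∀ s : K[X], x ≠ s • p) →
      maxNatDegree q ≤ maxNatDegree x) :
    maxNatDegree p + maxNatDegree q = maxNatDegree v := by
  obtain ⟨L, hL, hcross⟩ := exists_isUnit_cross_eq_smul hwv hspan
  have hpdeg := natDegree_le_maxNatDegree p
  have hqdeg := natDegree_le_maxNatDegree q
  have hlead : vecCoeff (p ⨯₃ q) (maxNatDegree p + maxNatDegree q) ≠ 0 := by
    rw [vecCoeff_cross hpdeg hqdeg, crossProduct_ne_zero_iff_linearIndependent]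
    exact linearIndependent_vecCoeff_maxNatDegree hp hq hind hpq hqmin
  calc maxNatDegree p + maxNatDegree q = maxNatDegree (p ⨯₃ q) :=
        (maxNatDegree_eq_of_le_of_vecCoeff_ne_zero (natDegree_cross_le hpdeg hqdeg) hlead).symm
    _ = maxNatDegree v := by rw [hcross, maxNatDegree_smul_of_isUnit hL]

end SyzygyBasis

@[simps]
def tripleEquiv (R : Type*) [Semiring R] : (R × R × R) ≃ₗ[R] (Fin 3 → R) where
  toFun x := ![x.1, x.2.1, x.2.2]
  invFun y := (y 0, y 1, y 2)
  map_add' _ _ := by ext i; fin_cases i <;> rfl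
  map_smul' _ _ := by ext i; fin_cases i <;> rfl
  left_inv _ := rfl
  right_inv y := by ext i; fin_cases i <;> rfl

theorem inSyz_iff_dotProduct {a b c : ℝ[X]} {x : ℝ[X] × ℝ[X] × ℝ[X]} :
    InSyz a b c x ↔ tripleEquiv ℝ[X] x ⬝ᵥ ![a, b, c] = 0 := by
  simp [InSyz, dotProduct, Fin.sum_univ_three]

theorem tripleDeg_eq_maxNatDegree (x : ℝ[X] × ℝ[X] × ℝ[X]) :
    tripleDeg x = maxNatDegree (tripleEquiv ℝ[X] x) := by
  simp [tripleDeg, maxNatDegree, Fin.univ_succ]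

theorem mu_basis_degree_sum_general (a b c : ℝ[X])
    (hac : IsCoprime a c)
    (p q : ℝ[X] × ℝ[X] × ℝ[X])
    (hp : InSyz a b c p) (hq : InSyz a b c q)
    (hspan : ∀ x, InSyz a b c x → ∃ s t : ℝ[X], x = s • p + t • q)
    (hind : ∀ s t : ℝ[X], s • p + t • q = 0 → s = 0 ∧ t = 0)
    (μ ν : ℕ) (hμ : tripleDeg p = μ) (hν : tripleDeg q = ν)
    (hμmin : ∀ x, InSyz a b c x → x ≠ 0 → μ ≤ tripleDeg x)
    (hνmin : ∀ x, InSyz a b c x → (∀ s : ℝ[X], x ≠ s • p) → ν ≤ tripleDeg x) :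
    μ + ν = max a.natDegree (max b.natDegree c.natDegree) := by
  subst hμ hν
  obtain ⟨A, C', hAC⟩ := hac
  set e := tripleEquiv ℝ[X]
  have hwv : ![A, 0, C'] ⬝ᵥ ![a, b, c] = 1 := by
    simpa [dotProduct, Fin.sum_univ_three] using hAC
  have hsyz (x : Fin 3 → ℝ[X]) : InSyz a b c (e.symm x) ↔ x ⬝ᵥ ![a, b, c] = 0 := by
    rw [inSyz_iff_dotProduct, e.apply_symm_apply]
  have hspan' (x) (hx : x ⬝ᵥ ![a, b, c] = 0) : ∃ s t : ℝ[X], x = s • e p + t • e q := by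
    obtain ⟨s, t, hst⟩ := hspan _ ((hsyz x).mpr hx)
    exact ⟨s, t, by rw [← e.apply_symm_apply x, hst, map_add, map_smul, map_smul]⟩
  have hind' (s t : ℝ[X]) (h : s • e p + t • e q = 0) : s = 0 ∧ t = 0 :=
    hind s t (e.injective (by rwa [map_add, map_smul, map_smul, map_zero]))
  have hq0 : q ≠ 0 := fun h => one_ne_zero (hind 0 1 (by simp [h])).2
  have hpq : maxNatDegree (e p) ≤ maxNatDegree (e q) := by
    simpa only [tripleDeg_eq_maxNatDegree] using hμmin q hq hq0
  have hqmin (x) (hx : x ⬝ᵥ ![a, b, c] = 0) (hxp : ∀ s : ℝ[X], x ≠ s • e p) :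
      maxNatDegree (e q) ≤ maxNatDegree x := by
    have := hνmin _ ((hsyz x).mpr hx) fun s h =>
      hxp s (by rw [← e.apply_symm_apply x, h, map_smul])
    rwa [tripleDeg_eq_maxNatDegree, tripleDeg_eq_maxNatDegree, e.apply_symm_apply] at this
  rw [tripleDeg_eq_maxNatDegree, tripleDeg_eq_maxNatDegree]
  exact (maxNatDegree_add_maxNatDegree_eq hwv (inSyz_iff_dotProduct.mp hp)
    (inSyz_iff_dotProduct.mp hq) hspan' hind' hpq hqmin).trans
    (tripleDeg_eq_maxNatDegree (a, b, c)).symm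

/-- Degree relation for a μ-basis: if `(p,q)` is a basis of the free module `Syz(a,b,c)`
of degrees `μ`, `ν` with `μ` minimal (a μ-basis), then `μ + ν = n` where
`n = max(deg a, deg b, deg c)`. -/
theorem mu_basis_degree_sum (a b c : ℝ[X])
    (hac : IsCoprime a c) (hbc : IsCoprime b c)
    (hne : ¬(a = 0 ∧ b = 0 ∧ c = 0))
    (p q : ℝ[X] × ℝ[X] × ℝ[X])
    (hp : InSyz a b c p) (hq : InSyz a b c q)
    (hspan : ∀ x, InSyz a b c x → ∃ s t : ℝ[X], x = s • p + t • q)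
    (hind : ∀ s t : ℝ[X], s • p + t • q = 0 → s = 0 ∧ t = 0)
    (μ ν : ℕ) (hμ : tripleDeg p = μ) (hν : tripleDeg q = ν)
    (hμmin : ∀ x, InSyz a b c x → x ≠ 0 → μ ≤ tripleDeg x)
    (hνmin : ∀ x, InSyz a b c x → (∀ s : ℝ[X], x ≠ s • p) → ν ≤ tripleDeg x) :
    μ + ν = max a.natDegree (max b.natDegree c.natDegree) :=
  mu_basis_degree_sum_general a b c hac p q hp hq hspan hind μ ν hμ hν hμmin hνmin
end

section
/- Let $r \ge 0$, $k \ge n_1 + r$, and let $a=(a_1,a_2), b=(b_1,b_2), c=(c_1,c_2)$ be $C^r$ spline pairs (i.e. $a_1\equiv a_2$, $b_1\equiv b_2$, $c_1\equiv c_2$ mod $(2u-1)^{r+1}$) with $\gcd(a_i,c_i)=\gcd(b_i,c_i)=1$ for $i=1,2$ and $n_1 = \max\{\deg a_1, \deg b_1, \deg c_1\}$. Let $\mathrm{Syz}_{i,k}$ denote the syzygies of $(a_i,b_i,c_i)$ of degree bounded by $(k-1,k,k)$, let $\mathcal{Q}^r_j = R_j/((2u-1)^{r+1})$, and let $\phi: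 \mathrm{Syz}_{1,k} \times \mathrm{Syz}_{2,k} \to \mathcal{Q}^r_{k-1} \times \mathcal{Q}^r_k \times \mathcal{Q}^r_k$ send $((A_1,B_1,C_1),(A_2,B_2,C_2))$ to the classes of $(A_1-A_2, B_1-B_2, C_1-C_2)$, and $\psi: \mathcal{Q}^r_{k-1} \times \mathcal{Q}^r_k \times \mathcal{Q}^r_k \to \mathcal{Q}^r_{n_1+k}$ send $(f,g,h)$ to $a_1 f + b_1 g + c_1 h$. Then the sequence $0 \to \mathrm{Syz}^{r,r,r}_k \to \mathrm{Syz}_{1,k} \times \mathrm{Syz}_{2,k} \xrightarrow{\phi} \mathcal{Q}^r_{k-1} \times \mathcal{Q}^r_k \times \mathcal{Q}^r_k \xrightarrow{\psi} \mathcal{Q}^r_{n_1+k} \to 0$ is exact, where $\mathrm{Syz}^{r,r,r}_k$ is the kernel of $\phi$, consisting of spline syzygies. -/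
/-!
Write `D = (2u - 1)^(r+1)`. As `b₁` and `c₁` are coprime, every class modulo `D` is `b₁ g + c₁ h`
with `g`, `h` reduced modulo `D`, which gives surjectivity of `ψ`. The difference of syzygies of two
triples that agree modulo `D` is a syzygy modulo `D`, so `ψ ∘ φ = 0`. Conversely, if
`D ∣ a₁ f + b₁ g + c₁ h`, reduce `f`, `g`, `h` modulo `D`; then `a₁ f + b₁ g + c₁ h = D m` with
`deg m < n₁`, and writing `m = b₁ β + c₁ γ` with `deg β, deg γ < n₁` yields the syzygy
`(f, g - D β, h - D γ)` of `(a₁, b₁, c₁)` of the required degrees. Paired with the zero syzygy of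
`(a₂, b₂, c₂)`, it is a preimage of the class of `(f, g, h)` under `φ`.
-/

open Polynomial

namespace Polynomial

theorem degree_mul_lt_of_le_of_lt {R : Type*} [Semiring R] {p q : R[X]} {i j : ℕ}
    (hp : p.degree ≤ i) (hq : q.degree < j) : (p * q).degree < ↑(i + j) :=
  (degree_mul_le_of_le hp le_rfl).trans_lt (WithBot.add_lt_add_left WithBot.coe_ne_bot hq)

theorem degree_lt_of_degree_mul_lt {R : Type*} [Semiring R] [NoZeroDivisors R] {p q : R[X]}
    {n : ℕ} (hp : p ≠ 0) (h : (p * q).degree < ↑(p.natDegree + n)) : q.degree < n := by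
  rw [degree_mul, degree_eq_natDegree hp, Nat.cast_add] at h
  exact lt_of_add_lt_add_left h

variable {K : Type*} [Field K]

theorem degree_mod_le (p q : K[X]) : (p % q).degree ≤ p.degree := by
  rcases eq_or_ne q 0 with rfl | hq
  · rw [EuclideanDomain.mod_zero]
  by_cases hpq : p.degree < q.degree
  · rw [(mod_eq_self_iff hq).mpr hpq]
  · exact (degree_mod_lt p hq).le.trans (not_lt.mp hpq)

theorem dvd_mod_sub (p q : K[X]) : q ∣ p % q - p :=
  ⟨-(p / q), by rw [EuclideanDomain.mod_eq_sub_mul_div]; ring⟩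

theorem exists_eq_mul_degree_lt_of_dvd {D a b c f g h : K[X]} (hD : D ≠ 0) {n : ℕ}
    (ha : a.degree ≤ n) (hb : b.degree ≤ n) (hc : c.degree ≤ n)
    (hf : f.degree < D.degree) (hg : g.degree < D.degree) (hh : h.degree < D.degree)
    (hdvd : D ∣ a * f + b * g + c * h) :
    ∃ m : K[X], a * f + b * g + c * h = D * m ∧ m.degree < n := by
  obtain ⟨m, hm⟩ := hdvd
  rw [degree_eq_natDegree hD] at hf hg hh
  refine ⟨m, hm, degree_lt_of_degree_mul_lt hD ?_⟩
  rw [← hm, add_comm D.natDegree]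
  exact (degree_add_le _ _).trans_lt (max_lt ((degree_add_le _ _).trans_lt
    (max_lt (degree_mul_lt_of_le_of_lt ha hf) (degree_mul_lt_of_le_of_lt hb hg)))
    (degree_mul_lt_of_le_of_lt hc hh))

end Polynomial

theorem dvd_syzygy_sub_of_dvd_sub {R : Type*} [CommRing R]
    {D a₁ a₂ b₁ b₂ c₁ c₂ A₁ B₁ C₁ A₂ B₂ C₂ : R}
    (ha : D ∣ a₁ - a₂) (hb : D ∣ b₁ - b₂) (hc : D ∣ c₁ - c₂)
    (h₁ : A₁ * a₁ + B₁ * b₁ + C₁ * c₁ = 0) (h₂ : A₂ * a₂ + B₂ * b₂ + C₂ * c₂ = 0) :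
    D ∣ a₁ * (A₁ - A₂) + b₁ * (B₁ - B₂) + c₁ * (C₁ - C₂) := by
  have hdiff : a₁ * (A₁ - A₂) + b₁ * (B₁ - B₂) + c₁ * (C₁ - C₂)
      = -((a₁ - a₂) * A₂ + (b₁ - b₂) * B₂ + (c₁ - c₂) * C₂) := by
    linear_combination h₁ - h₂
  rw [hdiff]
  exact (((ha.mul_right _).add (hb.mul_right _)).add (hc.mul_right _)).neg_right

namespace IsCoprime

variable {K : Type*} [Field K]

theorem exists_mul_add_mul_eq_of_degree_lt {b c m : K[X]} (hbc : IsCoprime b c) {n : ℕ}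
    (hm : m.degree < n) (hb : b.degree ≤ n) (hc : c.degree ≤ n) :
    ∃ β γ : K[X], b * β + c * γ = m ∧ β.degree < n ∧ γ.degree < n := by
  wlog hc0 : c ≠ 0 generalizing b c
  · have hb0 : b ≠ 0 := by
      rintro rfl
      exact not_isCoprime_zero_zero (not_not.mp hc0 ▸ hbc)
    obtain ⟨γ, β, h, hγ, hβ⟩ := this hbc.symm hc hb hb0
    exact ⟨β, γ, by rw [← h, add_comm], hβ, hγ⟩
  obtain ⟨p, q, hpq⟩ := hbc
  have hβ : (p * m % c).degree < c.natDegree := degree_eq_natDegree hc0 ▸ degree_mod_lt _ hc0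
  have hcn : c.natDegree ≤ n := natDegree_le_iff_degree_le.mpr hc
  have hcγ : c * (q * m + b * (p * m / c)) = m - b * (p * m % c) := by
    linear_combination m * hpq + b * EuclideanDomain.mod_add_div (p * m) c
  refine ⟨p * m % c, q * m + b * (p * m / c), by linear_combination hcγ,
    hβ.trans_le (by exact_mod_cast hcn), degree_lt_of_degree_mul_lt hc0 ?_⟩
  rw [hcγ, add_comm]
  exact (degree_sub_le _ _).trans_lt
    (max_lt (hm.trans_le (by exact_mod_cast Nat.le_add_right _ _))
      (degree_mul_lt_of_le_of_lt hb hβ))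

theorem exists_degree_lt_dvd_mul_add_mul_sub {D b c : K[X]} (hbc : IsCoprime b c) (hD : D ≠ 0)
    (w : K[X]) :
    ∃ g h : K[X], g.degree < D.degree ∧ h.degree < D.degree ∧ D ∣ b * g + c * h - w := by
  obtain ⟨p, q, hpq⟩ := hbc
  refine ⟨p * w % D, q * w % D, degree_mod_lt _ hD, degree_mod_lt _ hD, ?_⟩
  have hsplit : b * (p * w % D) + c * (q * w % D) - w
      = b * (p * w % D - p * w) + c * (q * w % D - q * w) := by
    linear_combination w * hpq
  rw [hsplit]
  exact dvd_add ((dvd_mod_sub _ _).mul_left b) ((dvd_mod_sub _ _).mul_left c)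

theorem exists_syzygy_dvd_sub {D a b c f g h : K[X]} (hbc : IsCoprime b c) (hD : D ≠ 0) {n : ℕ}
    (ha : a.degree ≤ n) (hb : b.degree ≤ n) (hc : c.degree ≤ n)
    (hdvd : D ∣ a * f + b * g + c * h) :
    ∃ A B C : K[X], A * a + B * b + C * c = 0 ∧ A.degree ≤ f.degree ∧
      B.degree < ↑(D.natDegree + n) ∧ C.degree < ↑(D.natDegree + n) ∧
      D ∣ A - f ∧ D ∣ B - g ∧ D ∣ C - h := by
  have hred : D ∣ a * (f % D) + b * (g % D) + c * (h % D) := by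
    convert hdvd.add (((dvd_mod_sub f D).mul_left a).add ((dvd_mod_sub g D).mul_left b) |>.add
      ((dvd_mod_sub h D).mul_left c)) using 1
    ring
  obtain ⟨m, hm, hmn⟩ := exists_eq_mul_degree_lt_of_dvd hD ha hb hc
    (degree_mod_lt f hD) (degree_mod_lt g hD) (degree_mod_lt h hD) hred
  obtain ⟨β, γ, hβγ, hβ, hγ⟩ := hbc.exists_mul_add_mul_eq_of_degree_lt hmn hb hc
  have hdeg (p q : K[X]) (hq : q.degree < n) : (p % D - D * q).degree < ↑(D.natDegree + n) :=
    (degree_sub_le _ _).trans_lt (max_lt ((degree_mod_lt p hD).trans_le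
      (degree_le_natDegree.trans (by exact_mod_cast Nat.le_add_right _ _)))
      (degree_mul_lt_of_le_of_lt degree_le_natDegree hq))
  have hdvd_sub (p q : K[X]) : D ∣ p % D - D * q - p := by
    rw [sub_right_comm]
    exact (dvd_mod_sub p D).sub (dvd_mul_right D q)
  exact ⟨f % D, g % D - D * β, h % D - D * γ, by linear_combination hm - D * hβγ,
    degree_mod_le f D, hdeg g β hβ, hdeg h γ hγ, dvd_mod_sub f D, hdvd_sub g β, hdvd_sub h γ⟩

end IsCoprime

theorem exact_sequence_spline_syzygies_general (r k n1 : ℕ) (a1 a2 b1 b2 c1 c2 : ℝ[X])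
    (ha : (2 * X - 1) ^ (r + 1) ∣ a1 - a2)
    (hb : (2 * X - 1) ^ (r + 1) ∣ b1 - b2)
    (hc : (2 * X - 1) ^ (r + 1) ∣ c1 - c2)
    (hbc1 : IsCoprime b1 c1)
    (hn1 : n1 = max a1.natDegree (max b1.natDegree c1.natDegree))
    (hk : n1 + r ≤ k) :
    -- ψ is surjective
    (∀ w : ℝ[X], w.degree ≤ ((n1 + k : ℕ) : WithBot ℕ) →
      ∃ f g h : ℝ[X], f.degree < (k : WithBot ℕ) ∧ g.degree ≤ (k : WithBot ℕ) ∧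
        h.degree ≤ (k : WithBot ℕ) ∧
        (2 * X - 1) ^ (r + 1) ∣ a1 * f + b1 * g + c1 * h - w) ∧
    -- im φ ⊆ ker ψ
    (∀ A1 B1 C1 A2 B2 C2 : ℝ[X],
      A1 * a1 + B1 * b1 + C1 * c1 = 0 → A2 * a2 + B2 * b2 + C2 * c2 = 0 →
      A1.degree < (k : WithBot ℕ) → B1.degree ≤ (k : WithBot ℕ) → C1.degree ≤ (k : WithBot ℕ) →
      A2.degree < (k : WithBot ℕ) → B2.degree ≤ (k : WithBot ℕ) → C2.degree ≤ (k : WithBot ℕ) →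
      (2 * X - 1) ^ (r + 1) ∣ a1 * (A1 - A2) + b1 * (B1 - B2) + c1 * (C1 - C2)) ∧
    -- ker ψ ⊆ im φ
    (∀ f g h : ℝ[X], f.degree < (k : WithBot ℕ) → g.degree ≤ (k : WithBot ℕ) →
      h.degree ≤ (k : WithBot ℕ) →
      (2 * X - 1) ^ (r + 1) ∣ a1 * f + b1 * g + c1 * h →
      ∃ A1 B1 C1 A2 B2 C2 : ℝ[X],
        A1 * a1 + B1 * b1 + C1 * c1 = 0 ∧ A2 * a2 + B2 * b2 + C2 * c2 = 0 ∧
        A1.degree < (k : WithBot ℕ) ∧ B1.degree ≤ (k : WithBot ℕ) ∧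
        C1.degree ≤ (k : WithBot ℕ) ∧ A2.degree < (k : WithBot ℕ) ∧
        B2.degree ≤ (k : WithBot ℕ) ∧ C2.degree ≤ (k : WithBot ℕ) ∧
        (2 * X - 1) ^ (r + 1) ∣ (A1 - A2) - f ∧
        (2 * X - 1) ^ (r + 1) ∣ (B1 - B2) - g ∧
        (2 * X - 1) ^ (r + 1) ∣ (C1 - C2) - h) := by
  set D : ℝ[X] := (2 * X - 1) ^ (r + 1) with hD_def
  have hDdeg : D.natDegree = r + 1 := by rw [hD_def]; compute_degree!
  have hD : D ≠ 0 := ne_zero_of_natDegree_gt (n := 0) (by omega)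
  have hle_k (p : ℝ[X]) (hp : p.degree < ↑(D.natDegree + n1)) : p.degree ≤ k :=
    Order.le_of_lt_succ (hp.trans_le (Nat.cast_le.mpr (by omega : D.natDegree + n1 ≤ k + 1)))
  have hdeg_n1 (p : ℝ[X]) (hp : p.natDegree ≤ n1) : p.degree ≤ n1 :=
    natDegree_le_iff_degree_le.mp hp
  refine ⟨fun w _ => ?_, fun A1 B1 C1 A2 B2 C2 h1 h2 _ _ _ _ _ _ =>
    dvd_syzygy_sub_of_dvd_sub ha hb hc h1 h2, fun f g h hf _ _ hdvd => ?_⟩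
  · obtain ⟨g, h, hg, hh, hgh⟩ := hbc1.exists_degree_lt_dvd_mul_add_mul_sub hD w
    rw [degree_eq_natDegree hD] at hg hh
    have hDn1 : (D.natDegree : WithBot ℕ) ≤ ↑(D.natDegree + n1) := by
      exact_mod_cast Nat.le_add_right _ _
    exact ⟨0, g, h, by simp, hle_k g (hg.trans_le hDn1), hle_k h (hh.trans_le hDn1),
      by simpa using hgh⟩
  · obtain ⟨A, B, C, hABC, hA, hB, hC, hAf, hBg, hCh⟩ :=
      hbc1.exists_syzygy_dvd_sub hD (hdeg_n1 a1 (by omega)) (hdeg_n1 b1 (by omega))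
        (hdeg_n1 c1 (by omega)) hdvd
    exact ⟨A, B, C, 0, 0, 0, hABC, by ring, hA.trans_lt hf, hle_k B hB, hle_k C hC,
      by simp, by simp, by simp, by simpa using hAf, by simpa using hBg, by simpa using hCh⟩

/-- Exactness of the sequence
`0 → Syz^{r,r,r}_k → Syz_{1,k} × Syz_{2,k} → 𝒬^r_{k-1} × 𝒬^r_k × 𝒬^r_k → 𝒬^r_{n₁+k} → 0`
for `k ≥ n₁ + r`, stated concretely in terms of polynomial representatives:
(1) `ψ` is surjective; (2) the image of `φ` is contained in the kernel of `ψ`;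
(3) the kernel of `ψ` is contained in the image of `φ`.  (Injectivity of the inclusion
`Syz^{r,r,r}_k = ker φ → Syz_{1,k} × Syz_{2,k}` is definitional.) -/
theorem exact_sequence_spline_syzygies (r k n1 : ℕ) (a1 a2 b1 b2 c1 c2 : ℝ[X])
    (ha : (2 * X - 1) ^ (r + 1) ∣ a1 - a2)
    (hb : (2 * X - 1) ^ (r + 1) ∣ b1 - b2)
    (hc : (2 * X - 1) ^ (r + 1) ∣ c1 - c2)
    (hac1 : IsCoprime a1 c1) (hbc1 : IsCoprime b1 c1)
    (hac2 : IsCoprime a2 c2) (hbc2 : IsCoprime b2 c2)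
    (hn1 : n1 = max a1.natDegree (max b1.natDegree c1.natDegree))
    (hk : n1 + r ≤ k) :
    -- ψ is surjective
    (∀ w : ℝ[X], w.degree ≤ ((n1 + k : ℕ) : WithBot ℕ) →
      ∃ f g h : ℝ[X], f.degree < (k : WithBot ℕ) ∧ g.degree ≤ (k : WithBot ℕ) ∧
        h.degree ≤ (k : WithBot ℕ) ∧
        (2 * X - 1) ^ (r + 1) ∣ a1 * f + b1 * g + c1 * h - w) ∧
    -- im φ ⊆ ker ψ
    (∀ A1 B1 C1 A2 B2 C2 : ℝ[X],
      A1 * a1 + B1 * b1 + C1 * c1 = 0 → A2 * a2 + B2 * b2 + C2 * c2 = 0 →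
      A1.degree < (k : WithBot ℕ) → B1.degree ≤ (k : WithBot ℕ) → C1.degree ≤ (k : WithBot ℕ) →
      A2.degree < (k : WithBot ℕ) → B2.degree ≤ (k : WithBot ℕ) → C2.degree ≤ (k : WithBot ℕ) →
      (2 * X - 1) ^ (r + 1) ∣ a1 * (A1 - A2) + b1 * (B1 - B2) + c1 * (C1 - C2)) ∧
    -- ker ψ ⊆ im φ
    (∀ f g h : ℝ[X], f.degree < (k : WithBot ℕ) → g.degree ≤ (k : WithBot ℕ) →
      h.degree ≤ (k : WithBot ℕ) →
      (2 * X - 1) ^ (r + 1) ∣ a1 * f + b1 * g + c1 * h →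
      ∃ A1 B1 C1 A2 B2 C2 : ℝ[X],
        A1 * a1 + B1 * b1 + C1 * c1 = 0 ∧ A2 * a2 + B2 * b2 + C2 * c2 = 0 ∧
        A1.degree < (k : WithBot ℕ) ∧ B1.degree ≤ (k : WithBot ℕ) ∧
        C1.degree ≤ (k : WithBot ℕ) ∧ A2.degree < (k : WithBot ℕ) ∧
        B2.degree ≤ (k : WithBot ℕ) ∧ C2.degree ≤ (k : WithBot ℕ) ∧
        (2 * X - 1) ^ (r + 1) ∣ (A1 - A2) - f ∧
        (2 * X - 1) ^ (r + 1) ∣ (B1 - B2) - g ∧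
        (2 * X - 1) ^ (r + 1) ∣ (C1 - C2) - h) :=
  exact_sequence_spline_syzygies_general r k n1 a1 a2 b1 b2 c1 c2 ha hb hc hbc1 hn1 hk
end

section
/- Fix real numbers $\mathfrak{a}(0)$, $\mathfrak{b}(0)$, $\mathfrak{a}'(0)$, $\mathfrak{b}'(0)$ with $\mathfrak{b}(0) \ne 0$. Consider the linear subspace $\mathcal{H} \subseteq \mathbb{R}^8$ of vectors $[p_1, q_1, \tilde q_1, s_1, p_2, q_2, \tilde q_2, s_2]$ for which there exist $r_1, \tilde r_2 \in \mathbb{R}$ satisfying: $p_1 = p_2$, $q_1 = \tilde q_2$, $r_1 = \tilde r_2$, $\tilde q_1 = \mathfrak{a}(0)\tilde q_2 + \mathfrak{b}(0) q_2$, and $s_1 = 2\mathfrak{a}(0)\tilde r_2 + \mathfrak{b}(0) s_2 + \mathfrak{a}'(0)\tilde q_2 + \mathfrak{b}'(0) q_2$. Then $\dim \mathcal{H} = 5$ if $\mathfrak{a}(0) \ne 0$, and $\dim \mathcal{H} = 4$ if $\mathfrak{a}(0) = 0$. -/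
/-! The space `ℋ` is cut out of `ℝ⁸` by linear conditions that each express one of
`p₁, q₁, q̃₁, s₁` through the data of the second patch; their matrix contains an identity
block, so it is surjective and rank–nullity applies. If `𝔞(0) ≠ 0`, the condition on `s₁` can
always be met by choosing `r̃₂`, leaving three conditions and `dim ℋ = 8 - 3`; if `𝔞(0) = 0`
it becomes a fourth condition and `dim ℋ = 8 - 4`. -/

/-- The space `ℋ` of first-order Taylor data `[p₁,q₁,q̃₁,s₁,p₂,q₂,q̃₂,s₂]` at a vertex
shared by two patches with gluing data values `𝔞(0), 𝔟(0), 𝔞'(0), 𝔟'(0)`: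
there exist `r₁ = r̃₂` with `p₁ = p₂`, `q₁ = q̃₂`,
`q̃₁ = 𝔞(0) q̃₂ + 𝔟(0) q₂`, `s₁ = 2𝔞(0) r̃₂ + 𝔟(0) s₂ + 𝔞'(0) q̃₂ + 𝔟'(0) q₂`.
Coordinates: `x 0 = p₁, x 1 = q₁, x 2 = q̃₁, x 3 = s₁, x 4 = p₂, x 5 = q₂,
x 6 = q̃₂, x 7 = s₂`. -/
def vertexH (A B A' B' : ℝ) : Submodule ℝ (Fin 8 → ℝ) where
  carrier := {x | x 0 = x 4 ∧ x 1 = x 6 ∧ x 2 = A * x 6 + B * x 5 ∧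
    ∃ t : ℝ, x 3 = 2 * A * t + B * x 7 + A' * x 6 + B' * x 5}
  add_mem' := by
    rintro x y ⟨h1, h2, h3, t, ht⟩ ⟨g1, g2, g3, s, hs⟩
    refine ⟨?_, ?_, ?_, t + s, ?_⟩ <;> simp only [Pi.add_apply]
    · rw [h1, g1]
    · rw [h2, g2]
    · rw [h3, g3]; ring
    · rw [ht, hs]; ring
  zero_mem' := ⟨rfl, rfl, by simp, 0, by simp⟩
  smul_mem' := by
    rintro c x ⟨h1, h2, h3, t, ht⟩
    refine ⟨?_, ?_, ?_, c * t, ?_⟩ <;> simp only [Pi.smul_apply, smul_eq_mul]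
    · rw [h1]
    · rw [h2]
    · rw [h3]; ring
    · rw [ht]; ring

open LinearMap

theorem LinearMap.finrank_ker_add_finrank_of_surjective {K V W : Type*} [DivisionRing K]
    [AddCommGroup V] [Module K V] [AddCommGroup W] [Module K W] [FiniteDimensional K V]
    (f : V →ₗ[K] W) (hf : Function.Surjective f) :
    Module.finrank K (ker f) + Module.finrank K W = Module.finrank K V := by
  rw [← f.finrank_range_add_finrank_ker, range_eq_top.mpr hf, finrank_top, add_comm]

def vertexConstraints (A B : ℝ) : Matrix (Fin 3) (Fin 8) ℝ :=
  !![1, 0, 0, 0, -1, 0, 0, 0;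
     0, 1, 0, 0, 0, 0, -1, 0;
     0, 0, 1, 0, 0, -B, -A, 0]

def crossingVertexConstraints (B A' B' : ℝ) : Matrix (Fin 4) (Fin 8) ℝ :=
  !![1, 0, 0, 0, -1, 0, 0, 0;
     0, 1, 0, 0, 0, 0, -1, 0;
     0, 0, 1, 0, 0, -B, 0, 0;
     0, 0, 0, 1, 0, -B', -A', -B]

theorem vertexConstraints_mulVecLin_surjective (A B : ℝ) :
    Function.Surjective (vertexConstraints A B).mulVecLin := by
  intro y
  refine ⟨![y 0, y 1, y 2, 0, 0, 0, 0, 0], ?_⟩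
  ext i
  fin_cases i <;> simp [vertexConstraints, Matrix.mulVec, dotProduct, Fin.sum_univ_eight]

theorem crossingVertexConstraints_mulVecLin_surjective (B A' B' : ℝ) :
    Function.Surjective (crossingVertexConstraints B A' B').mulVecLin := by
  intro y
  refine ⟨![y 0, y 1, y 2, y 3, 0, 0, 0, 0], ?_⟩
  ext i
  fin_cases i <;> simp [crossingVertexConstraints, Matrix.mulVec, dotProduct, Fin.sum_univ_eight]

theorem vertexH_eq_ker_vertexConstraints {A : ℝ} (hA : A ≠ 0) (B A' B' : ℝ) :
    vertexH A B A' B' = ker (vertexConstraints A B).mulVecLin := by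
  ext x
  have hr : ∃ t, x 3 = 2 * A * t + B * x 7 + A' * x 6 + B' * x 5 :=
    ⟨(x 3 - B * x 7 - A' * x 6 - B' * x 5) / (2 * A), by field_simp; ring⟩
  simp [vertexH, hr, vertexConstraints, funext_iff, Fin.forall_fin_succ, dotProduct,
    Fin.sum_univ_eight]
  constructor <;> rintro ⟨h₀, h₁, h₂⟩ <;> refine ⟨?_, ?_, ?_⟩ <;> linarith

theorem vertexH_zero_eq_ker_crossingVertexConstraints (B A' B' : ℝ) :
    vertexH 0 B A' B' = ker (crossingVertexConstraints B A' B').mulVecLin := by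
  ext x
  simp [vertexH, crossingVertexConstraints, funext_iff, Fin.forall_fin_succ, dotProduct,
    Fin.sum_univ_eight]
  constructor <;> rintro ⟨h₀, h₁, h₂, h₃⟩ <;> refine ⟨?_, ?_, ?_, ?_⟩ <;> linarith

theorem dim_vertexH_general (A B A' B' : ℝ) :
    (A ≠ 0 → Module.finrank ℝ ↥(vertexH A B A' B') = 5) ∧
    (A = 0 → Module.finrank ℝ ↥(vertexH A B A' B') = 4) := by
  constructor
  · intro hA
    have h := (vertexConstraints A B).mulVecLin.finrank_ker_add_finrank_of_surjective
      (vertexConstraints_mulVecLin_surjective A B)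
    rw [← vertexH_eq_ker_vertexConstraints hA B A' B'] at h
    simpa using h
  · rintro rfl
    have h := (crossingVertexConstraints B A' B').mulVecLin.finrank_ker_add_finrank_of_surjective
      (crossingVertexConstraints_mulVecLin_surjective B A' B')
    rw [← vertexH_zero_eq_ker_crossingVertexConstraints B A' B'] at h
    simpa using h

/-- Dimension of the Taylor data space at a two-patch vertex: `5` if `𝔞(0) ≠ 0`
(non-crossing edge) and `4` if `𝔞(0) = 0` (crossing edge). -/
theorem dim_vertexH (A B A' B' : ℝ) (hB : B ≠ 0) :
    (A ≠ 0 → Module.finrank ℝ ↥(vertexH A B A' B') = 5) ∧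
    (A = 0 → Module.finrank ℝ ↥(vertexH A B A' B') = 4) :=
  dim_vertexH_general A B A' B'
end
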